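/- For a budget T, number of arms K, rounds R, positive decreasing reals z_1 > z_2 > ... > z_R, positive integers b_1,...,b_R with sum b_1+...+b_R = K-1, define C = 1/z_R + Σ_{r=1}^R b_r/z_r and n_r = ⌈(T-K)/(C·z_r)⌉. Then the total sample count satisfies n_R + Σ_{r=1}^R b_r·n_r ≤ T. -/

import Mathlib

open Finset

/-!
Since `⌈x⌉₊ < x + 1` for `x ≥ 0`, each `n_r` is less than `(T - K) / (C z_r) + 1`.
Weighting by `1` (for `n_R`) and by `b_r`, the fractional parts add up to `(T - K) / C · C = T - K`
by the choice of `C`, and the `+ 1`s to `1 + Σ b_r ≤ K + 1`, so the sample count is `< T + 1`.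
-/

theorem sum_mul_ceil_div_lt {ι : Type*} {s : Finset ι} {w z : ι → ℝ} {X : ℝ} (hX : 0 ≤ X)
    (hw : ∀ i ∈ s, 0 ≤ w i) (hz : ∀ i ∈ s, 0 < z i) (hpos : ∃ i ∈ s, 0 < w i) :
    ∑ i ∈ s, w i * ⌈X / ((∑ j ∈ s, w j / z j) * z i)⌉₊ < X + ∑ i ∈ s, w i := by
  set C := ∑ j ∈ s, w j / z j
  have hC : 0 < C := by
    obtain ⟨i, hi, hwi⟩ := hpos
    exact sum_pos' (fun j hj => div_nonneg (hw j hj) (hz j hj).le) ⟨i, hi, div_pos hwi (hz i hi)⟩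
  have hceil : ∀ i ∈ s, (⌈X / (C * z i)⌉₊ : ℝ) < X / (C * z i) + 1 := fun i hi =>
    Nat.ceil_lt_add_one (div_nonneg hX (mul_pos hC (hz i hi)).le)
  calc ∑ i ∈ s, w i * ⌈X / (C * z i)⌉₊ < ∑ i ∈ s, w i * (X / (C * z i) + 1) := by
        obtain ⟨i, hi, hwi⟩ := hpos
        exact sum_lt_sum (fun j hj => mul_le_mul_of_nonneg_left (hceil j hj).le (hw j hj))
          ⟨i, hi, mul_lt_mul_of_pos_left (hceil i hi) hwi⟩
    _ = X / C * C + ∑ i ∈ s, w i := by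
        rw [mul_sum, ← sum_add_distrib]
        refine sum_congr rfl fun i hi => ?_
        field_simp [(hz i hi).ne']
    _ = X + ∑ i ∈ s, w i := by rw [div_mul_cancel₀ X hC.ne']

/-- The general sequential elimination algorithm respects the budget constraint:
with `n_r = ⌈(T-K)/(C z_r)⌉` and `C = 1/z_R + Σ_r b_r/z_r`, where `Σ_r b_r = K-1`,
we have `n_R + Σ_r b_r n_r ≤ T`. -/
theorem stmt0 (T K R : ℕ) (hR : 0 < R) (hTK : K ≤ T)
    (z : Fin R → ℝ) (hz : ∀ r, 0 < z r)
    (b : Fin R → ℕ)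
    (hbsum : ∑ r, b r = K - 1)
    (C : ℝ) (hC : C = 1 / z ⟨R - 1, by omega⟩ + ∑ r, (b r : ℝ) / z r)
    (n : Fin R → ℕ) (hn : ∀ r, n r = ⌈((T : ℝ) - K) / (C * z r)⌉₊) :
    n ⟨R - 1, by omega⟩ + ∑ r, b r * n r ≤ T := by
  set last : Fin R := ⟨R - 1, by omega⟩
  have key := sum_mul_ceil_div_lt (s := univ) (X := (T : ℝ) - K)
    (w := fun i => i.elim 1 fun r => (b r : ℝ)) (z := fun i => i.elim (z last) z)
    (sub_nonneg.mpr (by exact_mod_cast hTK))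
    (fun i _ => by cases i <;> simp) (fun i _ => by cases i <;> simp [hz])
    ⟨none, mem_univ _, one_pos⟩
  simp only [Fintype.sum_option, Option.elim, ← hC, ← hn, one_mul] at key
  have hbK : ∑ r, (b r : ℝ) ≤ K := by exact_mod_cast hbsum ▸ Nat.sub_le K 1
  have hlt : ((n last + ∑ r, b r * n r : ℕ) : ℝ) < T + 1 := by push_cast; linarith
  exact Nat.lt_succ_iff.mp (by exact_mod_cast hlt)
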